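/- The equation AΣ + ΣA' + B₁B₁' + BX' + XB' = 0 is solvable for X if and only if rank [[AΣ+ΣA'+B₁B₁', B],[B, 0]] = rank [[0, B],[B, 0]]. -/
import Mathlib

open Matrix

section Stmt13Aux

noncomputable def prodSubEquiv {R M N : Type*} [Ring R] [AddCommGroup M] [AddCommGroup N]
    [Module R M] [Module R N] (p : Submodule R M) (q : Submodule R N) :
    (p.prod q) ≃ₗ[R] p × q where
  toFun x := (⟨x.1.1, x.2.1⟩, ⟨x.1.2, x.2.2⟩)
  invFun x := ⟨(x.1.1, x.2.1), ⟨x.1.2, x.2.2⟩⟩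
  map_add' _ _ := rfl
  map_smul' _ _ := rfl
  left_inv _ := rfl
  right_inv _ := rfl

theorem range_prodMap' {R M M₂ M₃ M₄ : Type*} [Ring R] [AddCommGroup M] [AddCommGroup M₂]
    [AddCommGroup M₃] [AddCommGroup M₄] [Module R M] [Module R M₂] [Module R M₃] [Module R M₄]
    (f : M →ₗ[R] M₃) (g : M₂ →ₗ[R] M₄) :
    LinearMap.range (f.prodMap g) = (LinearMap.range f).prod (LinearMap.range g) := by
  ext ⟨x, y⟩
  simp only [LinearMap.mem_range, Submodule.mem_prod, LinearMap.prodMap_apply, Prod.mk.injEq,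
    Prod.exists]
  constructor
  · rintro ⟨a, b, h1, h2⟩; exact ⟨⟨a, h1⟩, ⟨b, h2⟩⟩
  · rintro ⟨⟨a, ha⟩, ⟨b, hb⟩⟩; exact ⟨a, b, ha, hb⟩

theorem rank_fromBlocks_diag {a b c d : ℕ} (A : Matrix (Fin a) (Fin b) ℝ)
    (D : Matrix (Fin c) (Fin d) ℝ) :
    (fromBlocks A (0 : Matrix (Fin a) (Fin d) ℝ) (0 : Matrix (Fin c) (Fin b) ℝ) D).rank
      = A.rank + D.rank := by
  classical
  set e₁ := LinearEquiv.sumArrowLequivProdArrow (Fin b) (Fin d) ℝ ℝ with he₁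
  set e₂ := LinearEquiv.sumArrowLequivProdArrow (Fin a) (Fin c) ℝ ℝ with he₂
  have key : (fromBlocks A 0 0 D).mulVecLin
      = (e₂.symm.toLinearMap) ∘ₗ ((A.mulVecLin.prodMap D.mulVecLin) ∘ₗ e₁.toLinearMap) := by
    apply LinearMap.ext; intro v
    simp only [mulVecLin_apply, LinearMap.comp_apply, LinearEquiv.coe_coe]
    rw [fromBlocks_mulVec]
    funext i
    cases i <;>
      simp [he₁, he₂, LinearEquiv.sumArrowLequivProdArrow, Equiv.sumArrowEquivProdArrow,
        zero_mulVec]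
  rw [Matrix.rank, key, LinearMap.range_comp,
    LinearMap.range_comp_of_range_eq_top _ (LinearEquiv.range e₁),
    LinearEquiv.finrank_map_eq, range_prodMap']
  rw [(prodSubEquiv _ _).finrank_eq, Module.finrank_prod]
  rfl

theorem rank_blocks_orth {n m : ℕ} (C : Matrix (Fin n) (Fin n) ℝ) (B : Matrix (Fin n) (Fin m) ℝ)
    (hC : Cᵀ = C) (hCB : C * B = 0) :
    (fromBlocks C B Bᵀ (0 : Matrix (Fin m) (Fin m) ℝ)).rank = C.rank + 2 * B.rank := by
  have hBC : Bᵀ * C = 0 := by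
    have := congrArg transpose hCB
    rwa [transpose_mul, hC, transpose_zero] at this
  set N := fromBlocks C B Bᵀ (0 : Matrix (Fin m) (Fin m) ℝ) with hN
  have hNt : Nᵀ = N := by
    rw [hN, fromBlocks_transpose, hC, transpose_transpose, transpose_zero]
  have h2 : Nᵀ * N = fromBlocks (C * C + B * Bᵀ) 0 0 (Bᵀ * B) := by
    rw [hNt, hN, fromBlocks_multiply, hCB, hBC]
    simp
  have h3 : (C * C + B * Bᵀ).rank = C.rank + B.rank := by
    have e1 : (fromRows C Bᵀ)ᵀ * (fromRows C Bᵀ) = C * C + B * Bᵀ := by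
      rw [transpose_fromRows, fromCols_mul_fromRows, hC, transpose_transpose]
    have e2 : (fromRows C Bᵀ) * (fromRows C Bᵀ)ᵀ
        = fromBlocks (C * C) 0 0 (Bᵀ * B) := by
      rw [transpose_fromRows, fromRows_mul_fromCols, hC, transpose_transpose, hCB, hBC]
    calc (C * C + B * Bᵀ).rank = (fromRows C Bᵀ).rank := by
            rw [← e1, rank_transpose_mul_self]
      _ = (fromBlocks (C * C) 0 0 (Bᵀ * B)).rank := by rw [← e2, rank_self_mul_transpose]
      _ = (C * C).rank + (Bᵀ * B).rank := rank_fromBlocks_diag _ _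
      _ = C.rank + B.rank := by
            have hcc : C * C = Cᵀ * C := by rw [hC]
            rw [hcc, rank_transpose_mul_self, rank_transpose_mul_self]
  calc N.rank = (Nᵀ * N).rank := (rank_transpose_mul_self N).symm
    _ = (C * C + B * Bᵀ).rank + (Bᵀ * B).rank := by rw [h2]; exact rank_fromBlocks_diag _ _
    _ = C.rank + B.rank + B.rank := by rw [h3, rank_transpose_mul_self]
    _ = C.rank + 2 * B.rank := by ring

theorem rank_blocks_add {n m : ℕ} (M : Matrix (Fin n) (Fin n) ℝ)
    (B Y : Matrix (Fin n) (Fin m) ℝ) :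
    (fromBlocks (M + B * Yᵀ + Y * Bᵀ) B Bᵀ (0 : Matrix (Fin m) (Fin m) ℝ)).rank
      = (fromBlocks M B Bᵀ (0 : Matrix (Fin m) (Fin m) ℝ)).rank := by
  have hL : IsUnit (fromBlocks (1 : Matrix (Fin n) (Fin n) ℝ) Y 0
      (1 : Matrix (Fin m) (Fin m) ℝ)).det := by
    rw [det_fromBlocks_zero₂₁, det_one, det_one, one_mul]; exact isUnit_one
  have hR : IsUnit (fromBlocks (1 : Matrix (Fin n) (Fin n) ℝ) 0 Yᵀ
      (1 : Matrix (Fin m) (Fin m) ℝ)).det := by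
    rw [det_fromBlocks_zero₁₂, det_one, det_one, one_mul]; exact isUnit_one
  have key : fromBlocks (1 : Matrix (Fin n) (Fin n) ℝ) Y 0 1
        * fromBlocks M B Bᵀ (0 : Matrix (Fin m) (Fin m) ℝ)
        * fromBlocks (1 : Matrix (Fin n) (Fin n) ℝ) 0 Yᵀ 1
      = fromBlocks (M + B * Yᵀ + Y * Bᵀ) B Bᵀ 0 := by
    rw [fromBlocks_multiply, fromBlocks_multiply]
    simp [Matrix.mul_assoc]
    abel
  rw [← key, rank_mul_eq_left_of_isUnit_det _ _ hR, rank_mul_eq_right_of_isUnit_det _ _ hL]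

theorem exists_G {n m : ℕ} (B : Matrix (Fin n) (Fin m) ℝ) :
    ∃ G : Matrix (Fin m) (Fin n) ℝ, Bᵀ * B * G = Bᵀ := by
  classical
  have hle : LinearMap.range (Bᵀ * B).mulVecLin ≤ LinearMap.range Bᵀ.mulVecLin := by
    rw [mulVecLin_mul]
    exact LinearMap.range_comp_le_range B.mulVecLin Bᵀ.mulVecLin
  have hrk : (Bᵀ * B).rank = Bᵀ.rank := by
    rw [rank_transpose_mul_self, rank_transpose]
  have heq : LinearMap.range (Bᵀ * B).mulVecLin = LinearMap.range Bᵀ.mulVecLin :=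
    Submodule.eq_of_le_of_finrank_eq hle hrk
  have hcol : ∀ j : Fin n, ∃ g : Fin m → ℝ, (Bᵀ * B) *ᵥ g = Bᵀ *ᵥ Pi.single j 1 := by
    intro j
    have : Bᵀ *ᵥ Pi.single j 1 ∈ LinearMap.range (Bᵀ * B).mulVecLin := by
      rw [heq]; exact ⟨Pi.single j 1, rfl⟩
    obtain ⟨g, hg⟩ := this
    exact ⟨g, hg⟩
  choose g hg using hcol
  refine ⟨Matrix.of (fun i j => g j i), ?_⟩
  ext i j
  have : ((Bᵀ * B) *ᵥ g j) i = (Bᵀ *ᵥ Pi.single j 1) i := by rw [hg]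
  simpa [Matrix.mul_apply, Matrix.mulVec, dotProduct, Pi.single_apply, mul_ite,
    Finset.sum_ite_eq'] using this

theorem eq_zero_of_rank_zero {n : ℕ} {C : Matrix (Fin n) (Fin n) ℝ} (h : C.rank = 0) : C = 0 := by
  classical
  have hbot : LinearMap.range C.mulVecLin = ⊥ := Submodule.finrank_eq_zero.mp h
  have hv : ∀ v, C *ᵥ v = 0 := by
    intro v
    have : C.mulVecLin v ∈ (⊥ : Submodule ℝ (Fin n → ℝ)) := hbot ▸ LinearMap.mem_range_self _ v
    simpa using this
  ext i j
  have := congrFun (hv (Pi.single j 1)) i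
  rwa [mulVec_single_one] at this

end Stmt13Aux

theorem stmt13 {n m m₁ : ℕ}
    (A Sg : Matrix (Fin n) (Fin n) ℝ) (B : Matrix (Fin n) (Fin m) ℝ)
    (B₁ : Matrix (Fin n) (Fin m₁) ℝ) (hSgsym : Sg.IsSymm) :
    (∃ X : Matrix (Fin n) (Fin m) ℝ,
        A * Sg + Sg * Aᵀ + B₁ * B₁ᵀ + B * Xᵀ + X * Bᵀ = 0) ↔
      (Matrix.fromBlocks (A * Sg + Sg * Aᵀ + B₁ * B₁ᵀ) B Bᵀ 0).rank
        = (Matrix.fromBlocks (0 : Matrix (Fin n) (Fin n) ℝ) B Bᵀ 0).rank := by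
  classical
  set M := A * Sg + Sg * Aᵀ + B₁ * B₁ᵀ with hMdef
  have hSg : Sgᵀ = Sg := hSgsym
  have hMsym : Mᵀ = M := by
    rw [hMdef]
    rw [transpose_add, transpose_add, transpose_mul, transpose_mul, transpose_mul,
      transpose_transpose, transpose_transpose, hSg]
    abel
  constructor
  · rintro ⟨X, hX⟩
    have hX' : M + (B * Xᵀ + X * Bᵀ) = 0 := by rw [← add_assoc]; exact hX
    have hM : 0 + B * (-X)ᵀ + (-X) * Bᵀ = M := by
      rw [transpose_neg, Matrix.mul_neg, Matrix.neg_mul, zero_add,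
        eq_neg_of_add_eq_zero_left hX']
      abel
    calc (fromBlocks M B Bᵀ 0).rank
        = (fromBlocks (0 + B * (-X)ᵀ + (-X) * Bᵀ) B Bᵀ 0).rank := by rw [hM]
      _ = (fromBlocks (0 : Matrix (Fin n) (Fin n) ℝ) B Bᵀ 0).rank := rank_blocks_add 0 B (-X)
  · intro hrk
    obtain ⟨G, hG⟩ := exists_G B
    set P := B * G with hP
    have hPtB : Pᵀ * B = B := by
      have h := congrArg transpose hG
      rw [transpose_mul, transpose_mul, transpose_transpose] at h
      rw [hP, transpose_mul, Matrix.mul_assoc]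
      exact h
    have hGtBt : Gᵀ * Bᵀ = Pᵀ := by rw [hP, transpose_mul]
    set Y := M * Gᵀ - (2⁻¹ : ℝ) • (P * M * Gᵀ) with hY
    have hYBt : Y * Bᵀ = M * Pᵀ - (2⁻¹ : ℝ) • (P * M * Pᵀ) := by
      rw [hY, Matrix.sub_mul, Matrix.smul_mul, Matrix.mul_assoc M Gᵀ Bᵀ, hGtBt,
        Matrix.mul_assoc (P * M) Gᵀ Bᵀ, hGtBt]
    have hBYt : B * Yᵀ = P * M - (2⁻¹ : ℝ) • (P * M * Pᵀ) := by
      have h := congrArg transpose hYBt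
      rw [transpose_mul, transpose_transpose] at h
      rw [h]
      simp [transpose_sub, transpose_smul, transpose_mul, transpose_transpose, hMsym,
        Matrix.mul_assoc]
    set Cm := M - B * Yᵀ - Y * Bᵀ with hC
    have hCeq : Cm = (1 - P) * (M * (1 - P)ᵀ) := by
      rw [hC, hBYt, hYBt]
      simp only [transpose_sub, transpose_one, Matrix.mul_sub, Matrix.sub_mul, Matrix.mul_one,
        Matrix.one_mul, Matrix.mul_assoc]
      module
    have hQB : (1 - P)ᵀ * B = 0 := by
      rw [transpose_sub, transpose_one, Matrix.sub_mul, Matrix.one_mul, hPtB, sub_self]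
    have hCB : Cm * B = 0 := by
      rw [hCeq, Matrix.mul_assoc, Matrix.mul_assoc, hQB, Matrix.mul_zero, Matrix.mul_zero]
    have hCt : Cmᵀ = Cm := by
      rw [hCeq, transpose_mul, transpose_mul, transpose_transpose, hMsym, Matrix.mul_assoc]
    have hMC : M = Cm + B * Yᵀ + Y * Bᵀ := by rw [hC]; abel
    have h1 : (fromBlocks M B Bᵀ 0).rank = (fromBlocks Cm B Bᵀ 0).rank := by
      conv_lhs => rw [hMC]
      exact rank_blocks_add Cm B Y
    have h2 : (fromBlocks Cm B Bᵀ 0).rank = Cm.rank + 2 * B.rank :=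
      rank_blocks_orth Cm B hCt hCB
    have h0 : (fromBlocks (0 : Matrix (Fin n) (Fin n) ℝ) B Bᵀ 0).rank = 2 * B.rank := by
      have h := rank_blocks_orth (0 : Matrix (Fin n) (Fin n) ℝ) B (by simp) (by simp)
      simpa [Matrix.rank_zero] using h
    have hr0 : Cm.rank = 0 := by
      have := h1.symm.trans hrk
      rw [h2, h0] at this
      omega
    have hCm0 : Cm = 0 := eq_zero_of_rank_zero hr0
    refine ⟨-Y, ?_⟩
    have hM' : M = B * Yᵀ + Y * Bᵀ := by
      have := hCm0
      rw [hC, sub_sub, sub_eq_zero] at this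
      exact this
    rw [hM', transpose_neg, Matrix.mul_neg, Matrix.neg_mul]
    abel
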